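/- arXiv:math/0603243 — 2 statements merged into one kernel-verified Lean document; each statement's English description precedes it below -/
import Mathlib

section
/- If R:Λ = I^ν, then Λ is reflexive, i.e. Λ = R:(R:Λ). -/
/-!
Past the reduction exponent the powers of `I` are stable, `Iᵏ⁺¹ = x Iᵏ` for `k ≥ ν`, and this
forces `Iᵛ = xᵛ Λ`: if `u Iⁿ ⊆ Iⁿ` then `u x^(ν+n) ∈ I^(ν+n) = xⁿ Iᵛ`, and conversely for `y ∈ Iᵛ`
one has `x⁻ᵛ y Iᵛ ⊆ x⁻ᵛ I^(2ν) = Iᵛ`. The hypothesis thus says `R:Λ = xᵛ Λ`, and as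
`R:(c M) = c⁻¹ (R:M)` for `c ≠ 0`, we get `R:(R:Λ) = x⁻ᵛ (R:Λ) = Λ`.
-/

open Submodule IsLocalRing

noncomputable section

/-- Length of an `R`-module, defined as the Krull dimension of its submodule lattice. -/
def modLength (R : Type*) [Ring R] (M : Type*) [AddCommGroup M] [Module R M] : WithBot ℕ∞ :=
  Order.krullDim (Submodule R M)

/-- Length of the quotient `I / J` for submodules `J ≤ I` of an ambient module. -/
def qlen (R : Type*) [CommRing R] {K : Type*} [AddCommGroup K] [Module R K]
    (I J : Submodule R K) : WithBot ℕ∞ :=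
  modLength R (I ⧸ (J.comap I.subtype))

/-- The image of an ideal of `R` in `K`, viewed as an `R`-submodule of `K`. -/
def idl (R : Type*) [CommRing R] (K : Type*) [CommRing K] [Algebra R K] (I : Ideal R) :
    Submodule R K :=
  Submodule.map (Algebra.linearMap R K) I

/-- The blowing-up `Λ(I) = ⋃ₙ (Iⁿ : Iⁿ)` of `R` along `I`, inside `K`. -/
def blowup (R : Type*) [CommRing R] (K : Type*) [CommRing K] [Algebra R K] (I : Ideal R) :
    Submodule R K :=
  ⨆ n : ℕ, (idl R K I ^ n) / (idl R K I ^ n)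

/-- The set of values of the nonzero elements of a fractional ideal. -/
def vvals {R : Type*} [CommRing R] {K : Type*} [CommRing K] [Algebra R K]
    (v : K → WithTop ℤ) (J : Submodule R K) : Set (WithTop ℤ) :=
  v '' {y | y ∈ J ∧ y ≠ 0}

open scoped Pointwise

namespace Submodule

variable {R : Type*} [CommSemiring R]

theorem pow_add_eq_smul_pow {A : Type*} [Semiring A] [Algebra R A] {J : Submodule R A} {c : A}
    {ν : ℕ} (h : ∀ k ≥ ν, J ^ (k + 1) = c • J ^ k) (j : ℕ) :
    J ^ (ν + j) = c ^ j • J ^ ν := by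
  induction j with
  | zero => simp
  | succ j ih => rw [← add_assoc, h _ (Nat.le_add_right ν j), ih, smul_smul, pow_succ']

theorem ne_zero_of_pow_succ_eq_smul {A : Type*} [Semiring A] [IsReduced A] [Algebra R A]
    {J : Submodule R A} {c : A} {ν : ℕ} (hJ : J ≠ ⊥) (h : J ^ (ν + 1) = c • J ^ ν) : c ≠ 0 := by
  rintro rfl
  rw [zero_smul, zero_eq_bot, pow_eq_bot ν.succ_ne_zero] at h
  exact hJ h

variable {A : Type*} [CommSemiring A] [Algebra R A]

theorem monotone_pow_div_pow (J : Submodule R A) : Monotone fun n : ℕ ↦ J ^ n / J ^ n := by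
  refine monotone_nat_of_le_succ fun n ↦ ?_
  rw [le_div_iff_mul_le, pow_succ, ← mul_assoc]
  exact mul_le_mul' (le_div_iff_mul_le.mp (le_refl (J ^ n / J ^ n))) le_rfl

theorem mem_iSup_pow_div_pow {J : Submodule R A} {z : A} :
    z ∈ ⨆ n : ℕ, J ^ n / J ^ n ↔ ∃ n, z ∈ J ^ n / J ^ n :=
  mem_iSup_of_directed _ J.monotone_pow_div_pow.directed_le

variable {K : Type*} [Field K] [Algebra R K]

theorem one_div_smul {c : K} (hc : c ≠ 0) (M : Submodule R K) :
    1 / (c • M) = c⁻¹ • (1 / M) := by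
  ext z
  simp only [mem_smul_iff_inv_mul_mem (inv_ne_zero hc), inv_inv, mem_div_iff_forall_mul_mem,
    mem_smul_pointwise_iff_exists, smul_eq_mul]
  refine ⟨fun h m hm ↦ ?_, fun h y ⟨m, hm, hy⟩ ↦ ?_⟩
  · simpa only [mul_assoc, mul_left_comm] using h _ ⟨m, hm, rfl⟩
  · simpa only [← hy, mul_assoc, mul_left_comm] using h m hm

theorem one_div_one_div_of_one_div_eq_smul {M : Submodule R K} {c : K} (hc : c ≠ 0)
    (h : 1 / M = c • M) : 1 / (1 / M) = M := by
  rw [h, one_div_smul hc, h, smul_smul, inv_mul_cancel₀ hc, one_smul]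

theorem pow_eq_smul_iSup_pow_div_pow {J : Submodule R K} {c : K} {ν : ℕ} (hcJ : c ∈ J)
    (hc : c ≠ 0) (h : ∀ k ≥ ν, J ^ (k + 1) = c • J ^ k) :
    J ^ ν = c ^ ν • ⨆ n : ℕ, J ^ n / J ^ n := by
  have hstable := pow_add_eq_smul_pow h
  apply le_antisymm
  · intro y hy
    rw [mem_smul_iff_inv_mul_mem (pow_ne_zero ν hc), mem_iSup_pow_div_pow]
    refine ⟨ν, mem_div_iff_forall_mul_mem.mpr fun w hw ↦ ?_⟩
    have hyw : y * w ∈ c ^ ν • J ^ ν := hstable ν ▸ pow_add J ν ν ▸ mul_mem_mul hy hw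
    rwa [mem_smul_iff_inv_mul_mem (pow_ne_zero ν hc), ← mul_assoc] at hyw
  · intro z hz
    obtain ⟨u, hu, rfl⟩ := (mem_smul_pointwise_iff_exists _ _ _).mp hz
    obtain ⟨n, hn⟩ := mem_iSup_pow_div_pow.mp hu
    have huc : u * c ^ (ν + n) ∈ c ^ n • J ^ ν :=
      hstable n ▸ mem_div_iff_forall_mul_mem.mp (J.monotone_pow_div_pow (Nat.le_add_left n ν) hn)
        _ (pow_mem_pow J hcJ _)
    rw [mem_smul_iff_inv_mul_mem (pow_ne_zero n hc)] at huc
    convert huc using 1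
    field_simp
    rw [smul_eq_mul, pow_add]
    ring

end Submodule

section idl

variable {R : Type*} [CommRing R] {K : Type*} [CommRing K] [Algebra R K]

theorem idl_pow (I : Ideal R) (n : ℕ) : idl R K I ^ n = idl R K (I ^ n) :=
  (Submodule.map_pow (M := I) (Algebra.ofId R K) n).symm

theorem idl_mul (I J : Ideal R) : idl R K (I * J) = idl R K I * idl R K J :=
  Submodule.map_mul I J (Algebra.ofId R K)

theorem idl_span_singleton_mul (x : R) (I : Ideal R) :
    idl R K (Ideal.span {x} * I) = algebraMap R K x • idl R K I := by
  rw [idl_mul, idl, Ideal.span, Submodule.map_span,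
    Set.image_singleton, Submodule.span_singleton_mul]
  rfl

theorem idl_ne_bot [IsFractionRing R K] {I : Ideal R} (hI : I ≠ ⊥) : idl R K I ≠ ⊥ := by
  rw [idl, Ne, ← Submodule.map_bot (Algebra.linearMap R K)]
  exact (Submodule.map_injective_of_injective (IsFractionRing.injective R K)).ne hI

end idl

theorem stmt_6_general
    (R : Type*) [CommRing R]
    (K : Type*) [Field K] [Algebra R K] [IsFractionRing R K]
    (I : Ideal R) (hI0 : I ≠ ⊥)
    (x : R) (hxI : x ∈ I)
    (ν : ℕ) (hν : IsLeast {n : ℕ | ∀ k ≥ n, I ^ (k + 1) = Ideal.span {x} * I ^ k} ν)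
    (hcond : (1 : Submodule R K) / (blowup R K I) = (idl R K I) ^ ν) :
    (blowup R K I) = (1 : Submodule R K) / ((1 : Submodule R K) / (blowup R K I)) := by
  set c := algebraMap R K x
  have hstable : ∀ k ≥ ν, idl R K I ^ (k + 1) = c • idl R K I ^ k := fun k hk ↦ by
    rw [idl_pow, hν.1 k hk, idl_span_singleton_mul, idl_pow]
  have hc : c ≠ 0 := Submodule.ne_zero_of_pow_succ_eq_smul (idl_ne_bot hI0) (hstable ν le_rfl)
  have hpow : idl R K I ^ ν = c ^ ν • blowup R K I :=
    Submodule.pow_eq_smul_iSup_pow_div_pow (Submodule.mem_map_of_mem hxI) hc hstable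
  exact (Submodule.one_div_one_div_of_one_div_eq_smul (pow_ne_zero ν hc) (hcond.trans hpow)).symm

theorem stmt_6
    (R : Type*) [CommRing R] [IsDomain R] [IsLocalRing R] [IsNoetherianRing R]
    (K : Type*) [Field K] [Algebra R K] [IsFractionRing R K]
    [IsDiscreteValuationRing (integralClosure R K)]
    [Module.Finite R (integralClosure R K)]
    (hres : ∀ y : integralClosure R K, ∃ a : R,
      y - algebraMap R (integralClosure R K) a ∈ maximalIdeal (integralClosure R K))
    (hkinf : Infinite (ResidueField R))
    (I : Ideal R) (hI0 : I ≠ ⊥) (hIrad : I.radical = maximalIdeal R)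
    (hInp : ¬ I.IsPrincipal)
    (x : R) (hxI : x ∈ I)
    (ν : ℕ) (hν : IsLeast {n : ℕ | ∀ k ≥ n, I ^ (k + 1) = Ideal.span {x} * I ^ k} ν)
    (hcond : (1 : Submodule R K) / (blowup R K I) = (idl R K I) ^ ν) :
    (blowup R K I) = (1 : Submodule R K) / ((1 : Submodule R K) / (blowup R K I)) :=
  stmt_6_general R K I hI0 x hxI ν hν hcond
end
end

section
/- If R:Λ is integrally closed (i.e. R:Λ = (R:Λ)R̄ ∩ R, equivalently R:Λ = R_{i_0} for the appropriate index), then d(R:Λ) = 0. -/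
open Submodule IsLocalRing

noncomputable section

/-
The integral closure `R̄` is a discrete valuation ring with uniformizer `t`, so its nonzero
`R̄`-stable `R`-submodules inside `R̄` are exactly the `tᵏR̄ = {y | k ≤ v y}`, and since `R` is
residually rational each quotient `tᵏR̄ / tᵏ⁺¹R̄` is a simple `R`-module. Hence the conductor
`R : R̄` is `tᶜR̄`, and `R : Λ`, being integrally closed, is `tᵃR̄ ∩ R = R_{i₀}` with `a = s_{i₀}`.
Since `R : R_n = R : (R : R̄) = R̄`, the length of `R̄ / (R : (R : Λ)) = (R : R_n) / (R : R_{i₀})`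
telescopes to `r_{i₀+1} + ⋯ + r_n`; and `i ∈ Γ` exactly when `s_{i-1} ≥ a`, i.e. when `i > i₀`.
-/

section Length

variable {R : Type*} [CommRing R] {K : Type*} [AddCommGroup K] [Module R K]

theorem qlen_eq_length (Y X : Submodule R K) :
    qlen R Y X = Module.length R (Y ⧸ X.comap Y.subtype) :=
  (Module.coe_length R _).symm

theorem qlen_add {X Y Z : Submodule R K} (hXY : X ≤ Y) (hYZ : Y ≤ Z) :
    qlen R Z X = qlen R Y X + qlen R Z Y := by
  let f := (X.comap Y.subtype).mapQ (X.comap Z.subtype) (inclusion hYZ) le_rfl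
  let g := factor (comap_mono (f := Z.subtype) hXY)
  have hf_mk (y : Y) :
      f (Submodule.Quotient.mk y) = Submodule.Quotient.mk (inclusion hYZ y) := rfl
  have hg_mk (z : Z) : g (Submodule.Quotient.mk z) = Submodule.Quotient.mk z := rfl
  have hf : Function.Injective f := by
    refine (injective_iff_map_eq_zero f).mpr fun y hy => ?_
    induction y using Submodule.Quotient.induction_on with | H y => ?_
    rw [hf_mk, Submodule.Quotient.mk_eq_zero] at hy
    exact (Submodule.Quotient.mk_eq_zero _).mpr hy
  have hfg : Function.Exact f g := by
    intro z
    induction z using Submodule.Quotient.induction_on with | H z => ?_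
    rw [hg_mk, Submodule.Quotient.mk_eq_zero, mem_comap, subtype_apply]
    constructor
    · intro hz
      exact ⟨Submodule.Quotient.mk ⟨z, hz⟩, rfl⟩
    · rintro ⟨y, hy⟩
      induction y using Submodule.Quotient.induction_on with | H y => ?_
      rw [hf_mk, Submodule.Quotient.eq, mem_comap] at hy
      simpa using Y.sub_mem y.2 (hXY hy)
  simp only [qlen_eq_length, Module.length_eq_add_of_exact f g hf (factor_surjective _) hfg]
  rfl

theorem qlen_self (X : Submodule R K) : qlen R X X = 0 := by
  rw [qlen_eq_length, comap_subtype_self, Module.length_eq_zero]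
  rfl

theorem qlen_eq_one_of_covBy {X Y : Submodule R K} (h : X ⋖ Y) : qlen R Y X = 1 := by
  have := (covBy_iff_quot_is_simple h.le).mp h
  rw [qlen_eq_length, Module.length_eq_one]
  rfl

theorem qlen_eq_sum_Ioc {N : ℕ → Submodule R K} {i j : ℕ} (hij : i ≤ j)
    (hN : MonotoneOn N (Set.Icc i j)) :
    qlen R (N j) (N i) = ∑ k ∈ Finset.Ioc i j, qlen R (N k) (N (k - 1)) := by
  induction j, hij using Nat.le_induction with
  | base => simp [qlen_self]
  | succ j hij ih =>
    have hmem {k} (hk : k ∈ Set.Icc i j) : k ∈ Set.Icc i (j + 1) := ⟨hk.1, hk.2.trans j.le_succ⟩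
    rw [Finset.sum_Ioc_succ_top hij, ← ih (hN.mono fun _ => hmem), Nat.add_sub_cancel]
    exact qlen_add (hN (hmem ⟨le_rfl, hij⟩) (hmem ⟨hij, le_rfl⟩) hij)
      (hN (hmem ⟨hij, le_rfl⟩) ⟨by omega, le_rfl⟩ j.le_succ)

end Length

theorem exists_addValuation_coe_eq {K : Type*} [Ring K] [Nontrivial K] (v : K → WithTop ℤ)
    (hv0 : ∀ y : K, v y = ⊤ ↔ y = 0) (hvmul : ∀ y z : K, v (y * z) = v y + v z)
    (hvadd : ∀ y z : K, min (v y) (v z) ≤ v (y + z)) :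
    ∃ w : AddValuation K (WithTop ℤ), ⇑w = v := by
  have hv1 : v 1 = 0 := by
    obtain ⟨m, hm⟩ := WithTop.ne_top_iff_exists.mp (mt (hv0 1).mp one_ne_zero)
    have h := hvmul 1 1
    rw [mul_one, ← hm, ← WithTop.coe_add, WithTop.coe_inj] at h
    rw [← hm, show m = 0 by omega]
    rfl
  exact ⟨AddValuation.of v ((hv0 0).mpr rfl) hv1 hvadd hvmul, rfl⟩

section FractionalIdeal

variable {R K : Type*} [CommRing R] [CommRing K] [Algebra R K]

theorem one_div_le_one {N : Submodule R K} (h : 1 ≤ N) : 1 / N ≤ 1 :=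
  fun y hy => by simpa using hy 1 (Submodule.one_le.mp h)

theorem one_le_toSubmodule (A : Subalgebra R K) : 1 ≤ Subalgebra.toSubmodule A :=
  Submodule.one_le.mpr A.one_mem

theorem one_div_antitone : Antitone fun N : Submodule R K => 1 / N :=
  fun _ _ h _ hy z hz => hy z (h hz)

theorem one_div_toSubmodule_mul_toSubmodule (A : Subalgebra R K) :
    1 / Subalgebra.toSubmodule A * Subalgebra.toSubmodule A = 1 / Subalgebra.toSubmodule A := by
  refine le_antisymm (Submodule.le_div_iff_mul_le.mpr ?_) ?_
  · rw [mul_assoc, (Subalgebra.isIdempotentElem_toSubmodule A).eq, ← Submodule.le_div_iff_mul_le]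
  · simpa using mul_le_mul_right (one_le_toSubmodule A) (1 / Subalgebra.toSubmodule A)

theorem one_div_ne_bot_of_fg [Nontrivial R] [IsFractionRing R K] {N : Submodule R K} (hN : N.FG) :
    1 / N ≠ ⊥ := by
  obtain ⟨a, ha, haN⟩ := FractionalIdeal.isFractional_of_fg (S := nonZeroDivisors R) hN
  refine (Submodule.ne_bot_iff _).mpr ⟨algebraMap R K a, fun y hy => ?_, ?_⟩
  · obtain ⟨r, hr⟩ := haN y hy
    exact Submodule.mem_one.mpr ⟨r, by rw [hr, Algebra.smul_def]⟩
  · exact IsFractionRing.to_map_ne_zero_of_mem_nonZeroDivisors ha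

theorem qlen_one_div_eq_sum {N : ℕ → Submodule R K} {r : ℕ → ℕ} {i₀ n : ℕ} (hi₀ : i₀ ≤ n)
    (hN : AntitoneOn N (Set.Icc i₀ n))
    (hr : ∀ i, 1 ≤ i → i ≤ n → (r i : WithBot ℕ∞) = qlen R (1 / N i) (1 / N (i - 1))) :
    qlen R (1 / N n) (1 / N i₀) = ((∑ k ∈ Finset.Ioc i₀ n, r k : ℕ) : WithBot ℕ∞) := by
  rw [qlen_eq_sum_Ioc hi₀ fun i hi j hj hij => one_div_antitone (hN hi hj hij), Nat.cast_sum]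
  refine Finset.sum_congr rfl fun k hk => (hr k ?_ ?_).symm <;> grind

end FractionalIdeal

section ValSubmodule

variable {R K : Type*} [CommRing R] [Field K] [Algebra R K]

def valSubmodule (v : AddValuation K (WithTop ℤ)) (hR : ∀ r : R, 0 ≤ v (algebraMap R K r))
    (k : ℕ) : Submodule R K where
  carrier := {y | (k : WithTop ℤ) ≤ v y}
  add_mem' hy hz := (le_min hy hz).trans (v.map_add _ _)
  zero_mem' := by simp
  smul_mem' r y hy := by
    change (k : WithTop ℤ) ≤ v (r • y)
    rw [Algebra.smul_def, v.map_mul]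
    exact le_add_of_nonneg_of_le (hR r) hy

variable {v : AddValuation K (WithTop ℤ)} {hR : ∀ r : R, 0 ≤ v (algebraMap R K r)}

@[simp]
theorem mem_valSubmodule {k : ℕ} {y : K} :
    y ∈ valSubmodule v hR k ↔ (k : WithTop ℤ) ≤ v y :=
  Iff.rfl

theorem valSubmodule_zero {A : Subalgebra R K} (hA : ∀ y, y ∈ A ↔ 0 ≤ v y) :
    valSubmodule v hR 0 = Subalgebra.toSubmodule A := by
  ext y
  simp [hA]

theorem val_pow_of_val_eq_one {t : K} (ht : v t = 1) (k : ℕ) : v (t ^ k) = k := by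
  rw [v.map_pow, ht, nsmul_one]

theorem valSubmodule_strictAnti {t : K} (ht : v t = 1) : StrictAnti (valSubmodule v hR) := by
  refine strictAnti_nat_of_succ_lt fun k => lt_of_le_of_ne (fun y hy => ?_) fun h => ?_
  · exact le_trans (by exact_mod_cast k.le_succ) (mem_valSubmodule.mp hy)
  · have hk : t ^ k ∈ valSubmodule v hR k := by simp [val_pow_of_val_eq_one ht]
    rw [← h, mem_valSubmodule, val_pow_of_val_eq_one ht] at hk
    have hk' : ((k + 1 : ℤ) : WithTop ℤ) ≤ (k : ℤ) := by exact_mod_cast hk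
    exact absurd (WithTop.coe_le_coe.mp hk') (by omega)

theorem exists_val_eq_natCast {y : K} (hy : y ≠ 0) (h : 0 ≤ v y) : ∃ k : ℕ, v y = k := by
  obtain ⟨m, hm⟩ := WithTop.ne_top_iff_exists.mp ((v.top_iff).not.mpr hy)
  rw [← hm] at h ⊢
  exact ⟨m.toNat, by rw [← WithTop.coe_natCast, Int.toNat_of_nonneg (by exact_mod_cast h)]⟩

theorem exists_eq_mul_of_val_le {A : Subalgebra R K} (hA : ∀ y, y ∈ A ↔ 0 ≤ v y) {y z : K}
    (hy : y ≠ 0) (hyz : v y ≤ v z) : ∃ u ∈ A, z = y * u := by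
  refine ⟨y⁻¹ * z, (hA _).mpr ?_, by field_simp⟩
  have h : v y + 0 ≤ v y + v (y⁻¹ * z) := by
    rwa [add_zero, ← v.map_mul, mul_inv_cancel_left₀ hy]
  exact (WithTop.add_le_add_iff_left (v.top_iff.not.mpr hy)).mp h

theorem exists_mul_toSubmodule_eq_valSubmodule {A : Subalgebra R K}
    (hA : ∀ y, y ∈ A ↔ 0 ≤ v y) {N : Submodule R K} (hN : N ≠ ⊥)
    (hNA : N ≤ Subalgebra.toSubmodule A) :
    ∃ a : ℕ, N * Subalgebra.toSubmodule A = valSubmodule v hR a ∧ ∃ y ∈ N, v y = a := by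
  let S : Set ℕ := {k | ∃ y ∈ N, v y = k}
  have hval (y) (hy : y ∈ N) (hy0 : y ≠ 0) : ∃ k ∈ S, v y = k := by
    obtain ⟨k, hk⟩ := exists_val_eq_natCast hy0 ((hA y).mp (hNA hy))
    exact ⟨k, ⟨y, hy, hk⟩, hk⟩
  obtain ⟨y₁, hy₁, hy₁0⟩ := (Submodule.ne_bot_iff N).mp hN
  obtain ⟨y₀, hy₀, hvy₀⟩ : sInf S ∈ S := Nat.sInf_mem ((hval y₁ hy₁ hy₁0).imp fun _ => And.left)
  have hy₀0 : y₀ ≠ 0 := by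
    rintro rfl
    simp at hvy₀
  refine ⟨sInf S, le_antisymm ?_ fun z hz => ?_, y₀, hy₀, hvy₀⟩
  · refine Submodule.mul_le.mpr fun y hy u hu => ?_
    rcases eq_or_ne y 0 with rfl | hy0
    · simp
    obtain ⟨k, hkS, hk⟩ := hval y hy hy0
    rw [mem_valSubmodule, v.map_mul, hk]
    exact le_add_of_le_of_nonneg (by exact_mod_cast Nat.sInf_le hkS) ((hA u).mp hu)
  · obtain ⟨u, hu, rfl⟩ := exists_eq_mul_of_val_le hA hy₀0 (hvy₀.trans_le hz)
    exact Submodule.mul_mem_mul hy₀ hu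

theorem valSubmodule_succ_covBy {A : Subalgebra R K} (hA : ∀ y, y ∈ A ↔ 0 ≤ v y) {t : K}
    (ht : v t = 1) (hres : ∀ u ∈ A, ∃ r : R, 1 ≤ v (u - algebraMap R K r)) (k : ℕ) :
    valSubmodule v hR (k + 1) ⋖ valSubmodule v hR k := by
  refine covBy_iff_lt_and_eq_or_eq.mpr
    ⟨valSubmodule_strictAnti ht k.lt_succ_self, fun Z hZ₁ hZ₂ => ?_⟩
  by_cases hex : ∃ y ∈ Z, v y = k
  · obtain ⟨y, hyZ, hvy⟩ := hex
    have hy0 : y ≠ 0 := by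
      rintro rfl
      simp at hvy
    refine Or.inr (le_antisymm hZ₂ fun z hz => ?_)
    obtain ⟨u, hu, rfl⟩ := exists_eq_mul_of_val_le hA hy0 (hvy.trans_le hz)
    obtain ⟨r, hr⟩ := hres u hu
    have hsplit : y * u = r • y + y * (u - algebraMap R K r) := by
      rw [Algebra.smul_def]
      ring
    rw [hsplit]
    refine Z.add_mem (Z.smul_mem r hyZ) (hZ₁ ?_)
    rw [mem_valSubmodule, v.map_mul, hvy, Nat.cast_succ]
    exact add_le_add le_rfl hr
  · refine Or.inl (le_antisymm (fun z hz => ?_) hZ₁)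
    rcases eq_or_ne z 0 with rfl | hz0
    · exact zero_mem _
    have hkz := mem_valSubmodule.mp (hZ₂ hz)
    obtain ⟨m, hm⟩ := exists_val_eq_natCast hz0 ((Nat.cast_nonneg' k).trans hkz)
    have hkm : k ≠ m := fun h => hex ⟨z, hz, by rw [hm, h]⟩
    rw [hm, Nat.cast_le] at hkz
    rw [mem_valSubmodule, hm, Nat.cast_le]
    omega

theorem qlen_valSubmodule_zero {A : Subalgebra R K} (hA : ∀ y, y ∈ A ↔ 0 ≤ v y) {t : K}
    (ht : v t = 1) (hres : ∀ u ∈ A, ∃ r : R, 1 ≤ v (u - algebraMap R K r)) (k : ℕ) :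
    qlen R (valSubmodule v hR 0) (valSubmodule v hR k) = k := by
  induction k with
  | zero => exact qlen_self _
  | succ k ih =>
    have hanti := (valSubmodule_strictAnti (hR := hR) ht).antitone
    rw [qlen_add (hanti k.le_succ) (hanti k.zero_le), ih,
      qlen_eq_one_of_covBy (valSubmodule_succ_covBy hA ht hres k)]
    push_cast
    ring

theorem one_le_val_of_mem_maximalIdeal {A : Subalgebra R K} (hA : ∀ y, y ∈ A ↔ 0 ≤ v y)
    [IsLocalRing A] {u : A} (hu : u ∈ maximalIdeal A) : 1 ≤ v u := by
  rcases eq_or_ne (u : K) 0 with hu0 | hu0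
  · simp [hu0]
  obtain ⟨m, hm⟩ := exists_val_eq_natCast hu0 ((hA u).mp u.2)
  rcases m.eq_zero_or_pos with rfl | hm0
  · refine absurd ?_ ((mem_maximalIdeal u).mp hu)
    have hinv : (u : K)⁻¹ ∈ A := (hA _).mpr (by rw [v.map_inv, hm]; simp)
    exact isUnit_iff_exists_inv.mpr ⟨⟨_, hinv⟩, Subtype.ext (mul_inv_cancel₀ hu0)⟩
  · rw [hm]
    exact_mod_cast hm0

theorem one_div_one_div_toSubmodule {A : Subalgebra R K} (hA : ∀ y, y ∈ A ↔ 0 ≤ v y) {t : K}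
    (ht : v t = 1) {γ : ℕ} (hγ : 1 / Subalgebra.toSubmodule A = valSubmodule v hR γ) :
    1 / (1 / Subalgebra.toSubmodule A) = Subalgebra.toSubmodule A := by
  refine le_antisymm (fun z hz => ?_) (Submodule.le_div_iff_mul_le.mpr ?_)
  · have hzt : z * t ^ γ ∈ 1 / Subalgebra.toSubmodule A := fun u hu => by
      rw [mul_assoc]
      refine hz _ ?_
      rw [hγ, mem_valSubmodule, v.map_mul, val_pow_of_val_eq_one ht]
      exact le_add_of_nonneg_right ((hA u).mp hu)
    rw [hγ, mem_valSubmodule, v.map_mul, val_pow_of_val_eq_one ht] at hzt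
    have h : (γ : WithTop ℤ) + 0 ≤ γ + v z := by rwa [add_zero, add_comm]
    exact (hA z).mpr ((WithTop.add_le_add_iff_left (WithTop.natCast_ne_top γ)).mp h)
  · exact mul_one_div_le_one

theorem vvals_valSubmodule_inf (a : ℕ) (N : Submodule R K) :
    vvals v (valSubmodule v hR a ⊓ N) = vvals v N ∩ Set.Ici (a : WithTop ℤ) := by
  ext m
  constructor
  · rintro ⟨y, ⟨⟨hya, hyN⟩, hy0⟩, rfl⟩
    exact ⟨⟨y, ⟨hyN, hy0⟩, rfl⟩, hya⟩
  · rintro ⟨⟨y, ⟨hyN, hy0⟩, rfl⟩, hya⟩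
    exact ⟨y, ⟨⟨hya, hyN⟩, hy0⟩, rfl⟩

theorem exists_one_div_toSubmodule_eq_valSubmodule [Nontrivial R] [IsFractionRing R K]
    {A : Subalgebra R K} [Module.Finite R A] (hA : ∀ y, y ∈ A ↔ 0 ≤ v y) :
    ∃ γ : ℕ, 1 / Subalgebra.toSubmodule A = valSubmodule v hR γ := by
  obtain ⟨γ, hγ, -⟩ := exists_mul_toSubmodule_eq_valSubmodule (hR := hR) hA
    (one_div_ne_bot_of_fg (Module.Finite.iff_fg.mp ‹Module.Finite R A›))
    ((one_div_le_one (one_le_toSubmodule A)).trans (one_le_toSubmodule A))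
  exact ⟨γ, (one_div_toSubmodule_mul_toSubmodule A).symm.trans hγ⟩

theorem exists_eq_valSubmodule_inf_one {A : Subalgebra R K} (hA : ∀ y, y ∈ A ↔ 0 ≤ v y)
    {t : K} (ht : v t = 1) {γ : ℕ} (hγ : 1 / Subalgebra.toSubmodule A = valSubmodule v hR γ)
    {C : Submodule R K} (hAC : 1 / Subalgebra.toSubmodule A ≤ C) (hC1 : C ≤ 1)
    (hC : C = C * Subalgebra.toSubmodule A ⊓ 1) :
    ∃ a ≤ γ, C = valSubmodule v hR a ⊓ 1 ∧ (a : WithTop ℤ) ∈ vvals v (1 : Submodule R K) := by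
  have hM := valSubmodule_strictAnti (hR := hR) ht
  have hC0 : C ≠ ⊥ := ne_bot_of_le_ne_bot (hγ ▸ (hM γ.lt_succ_self).ne_bot) hAC
  obtain ⟨a, ha, y, hyC, hya⟩ :=
    exists_mul_toSubmodule_eq_valSubmodule hA hC0 (hC1.trans (one_le_toSubmodule A))
  have hy0 : y ≠ 0 := by
    rintro rfl
    simp at hya
  have hCA : C ≤ C * Subalgebra.toSubmodule A := by
    simpa using mul_le_mul_right (one_le_toSubmodule A) C
  exact ⟨a, hM.le_iff_ge.mp (hγ ▸ ha ▸ hAC.trans hCA), by rw [hC, ha],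
    y, ⟨hC1 hyC, hy0⟩, hya⟩

end ValSubmodule

theorem one_le_blowup {R K : Type*} [CommRing R] [CommRing K] [Algebra R K] (I : Ideal R) :
    1 ≤ blowup R K I :=
  Submodule.one_le.mpr (le_iSup (fun n : ℕ => idl R K I ^ n / idl R K I ^ n) 0 (by simp))

theorem blowup_le_integralClosure {R K : Type*} [CommRing R] [IsDomain R] [IsNoetherianRing R]
    [Field K] [Algebra R K] [IsFractionRing R K] {I : Ideal R} (hI : I ≠ ⊥) :
    blowup R K I ≤ Subalgebra.toSubmodule (integralClosure R K) := by
  obtain ⟨x, hxI, hx0⟩ := (Submodule.ne_bot_iff I).mp hI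
  refine iSup_le fun m y hy => ?_
  have hfg : (idl R K I ^ m).FG := ((IsNoetherian.noetherian I).map _).pow m
  have hne : idl R K I ^ m ≠ ⊥ := (Submodule.ne_bot_iff _).mpr
    ⟨algebraMap R K x ^ m,
      Submodule.pow_mem_pow _ (Submodule.mem_map_of_mem (f := Algebra.linearMap R K) hxI) m,
      pow_ne_zero m (IsFractionRing.to_map_ne_zero_of_mem_nonZeroDivisors
        (mem_nonZeroDivisors_of_ne_zero hx0))⟩
  exact isIntegral_of_smul_mem_submodule _ hne hfg y hy

theorem setOf_sub_one_mem_inter_Ici_eq_Ioc {α : Type*} [LinearOrder α] {f : ℕ → α} {V : Set α}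
    {n i₀ : ℕ} (hf : StrictMonoOn f (Set.Iic n)) (hV : ∀ i ≤ n, f i ∈ V) (hi₀ : i₀ ≤ n) :
    {i | 1 ≤ i ∧ i ≤ n ∧ f (i - 1) ∈ V ∩ Set.Ici (f i₀)} = Set.Ioc i₀ n := by
  ext i
  simp only [Set.mem_ofPred_eq, Set.mem_Ioc, Set.mem_inter_iff, Set.mem_Ici]
  constructor
  · rintro ⟨h1i, hin, -, hi₀i⟩
    have := (hf.le_iff_le hi₀ (show i - 1 ≤ n by omega)).mp hi₀i
    omega
  · rintro ⟨hi₀i, hin⟩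
    exact ⟨by omega, hin, hV _ (by omega),
      hf.monotoneOn hi₀ (show i - 1 ≤ n by omega) (by omega)⟩

theorem stmt_13_general
    (R : Type*) [CommRing R] [IsDomain R] [IsNoetherianRing R]
    (K : Type*) [Field K] [Algebra R K] [IsFractionRing R K]
    [IsDiscreteValuationRing (integralClosure R K)]
    [Module.Finite R (integralClosure R K)]
    (hres : ∀ y : integralClosure R K, ∃ a : R,
      y - algebraMap R (integralClosure R K) a ∈ maximalIdeal (integralClosure R K))
    (v : K → WithTop ℤ) (hv0 : ∀ y : K, v y = ⊤ ↔ y = 0)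
    (hvmul : ∀ y z : K, v (y * z) = v y + v z)
    (hvadd : ∀ y z : K, min (v y) (v z) ≤ v (y + z))
    (t : K) (hvt : v t = 1)
    (hvRbar : ∀ y : K, y ∈ integralClosure R K ↔ 0 ≤ v y)
    (I : Ideal R) (hI0 : I ≠ ⊥)
    (c : ℕ) (hc : (c : WithBot ℕ∞) = qlen R ((integralClosure R K).toSubmodule) ((1 : Submodule R K) / ((integralClosure R K).toSubmodule)))
    (n : ℕ)
    (s : ℕ → ℕ) (hsc : s n = c) (hsmono : StrictMonoOn s (Set.Iic n))
    (hsval : ∀ i ≤ n, ((s i : ℕ) : WithTop ℤ) ∈ vvals v (1 : Submodule R K))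
    (hsall : ∀ m : ℕ, (m : WithTop ℤ) ∈ vvals v (1 : Submodule R K) → m ≤ c → ∃ i ≤ n, s i = m)
    (Rmod : ℕ → Submodule R K)
    (hRmod : ∀ i, ∀ y : K, y ∈ Rmod i ↔ (y ∈ (1 : Submodule R K) ∧ (s i : WithTop ℤ) ≤ v y))
    (r : ℕ → ℕ)
    (hr : ∀ i, 1 ≤ i → i ≤ n → (r i : WithBot ℕ∞) =
      qlen R ((1 : Submodule R K) / Rmod i) ((1 : Submodule R K) / Rmod (i - 1)))
    (Γ : Set ℕ)
    (hΓ : Γ = {i : ℕ | 1 ≤ i ∧ i ≤ n ∧ (s (i - 1) : WithTop ℤ) ∈ vvals v ((1 : Submodule R K) / (blowup R K I))})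
    (b : ℕ) (hb : (b : WithBot ℕ∞) = qlen R ((integralClosure R K).toSubmodule) ((1 : Submodule R K) / ((1 : Submodule R K) / (blowup R K I))))
    (d : ℤ) (hd : d = (b : ℤ) - ∑ i ∈ Finset.Icc 1 n, Γ.indicator (fun j => (r j : ℤ)) i)
    (hic : (1 : Submodule R K) / (blowup R K I) = (((1 : Submodule R K) / (blowup R K I)) * ((integralClosure R K).toSubmodule)) ⊓ 1) :
    d = 0 := by
  obtain ⟨v, rfl⟩ := exists_addValuation_coe_eq v hv0 hvmul hvadd
  set A := integralClosure R K
  have hR (r : R) : 0 ≤ v (algebraMap R K r) := (hvRbar _).mp (A.algebraMap_mem r)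
  have hres' (u) (hu : u ∈ A) : ∃ r : R, 1 ≤ v (u - algebraMap R K r) :=
    (hres ⟨u, hu⟩).imp fun _ hr => one_le_val_of_mem_maximalIdeal hvRbar hr
  obtain ⟨γ, hγ⟩ := exists_one_div_toSubmodule_eq_valSubmodule (hR := hR) hvRbar
  obtain rfl : γ = c := by
    have := qlen_valSubmodule_zero (hR := hR) hvRbar hvt hres' γ
    rw [valSubmodule_zero hvRbar, ← hγ, ← hc] at this
    exact_mod_cast this.symm
  obtain ⟨a, hac, hCa, ha⟩ := exists_eq_valSubmodule_inf_one (C := 1 / blowup R K I) hvRbar hvt hγ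
    (one_div_antitone (blowup_le_integralClosure hI0)) (one_div_le_one (one_le_blowup I)) hic
  obtain ⟨i₀, hi₀n, rfl⟩ := hsall a ha hac
  have hRmod_eq (i) : Rmod i = valSubmodule v hR (s i) ⊓ 1 := by
    ext y
    rw [hRmod, mem_inf, mem_valSubmodule, and_comm]
  have hRmodn : 1 / Rmod n = A.toSubmodule := by
    rw [hRmod_eq, hsc, ← hγ, inf_eq_left.mpr (one_div_le_one (one_le_toSubmodule A))]
    exact one_div_one_div_toSubmodule hvRbar hvt hγ
  have hRmod_anti : AntitoneOn Rmod (Set.Icc i₀ n) := fun i hi j hj hij => by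
    simp only [hRmod_eq]
    exact inf_le_inf_right _
      ((valSubmodule_strictAnti hvt).antitone (hsmono.monotoneOn hi.2 hj.2 hij))
  have hb_sum : b = ∑ k ∈ Finset.Ioc i₀ n, r k := by
    refine Nat.cast_injective (R := WithBot ℕ∞) ?_
    rw [hb, ← hRmodn, hCa, ← hRmod_eq]
    exact qlen_one_div_eq_sum hi₀n hRmod_anti hr
  have hΓ_eq : Γ = ↑(Finset.Ioc i₀ n) := by
    rw [hΓ, hCa, vvals_valSubmodule_inf, Finset.coe_Ioc]
    exact setOf_sub_one_mem_inter_Ici_eq_Ioc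
      (fun i hi j hj hij => by exact_mod_cast hsmono hi hj hij) hsval hi₀n
  rw [hd, hΓ_eq, Finset.sum_indicator_subset _ fun i hi => ?_, hb_sum, Nat.cast_sum, sub_self]
  simp only [Finset.mem_Ioc, Finset.mem_Icc] at hi ⊢
  omega

theorem stmt_13
    (R : Type*) [CommRing R] [IsDomain R] [IsLocalRing R] [IsNoetherianRing R]
    (K : Type*) [Field K] [Algebra R K] [IsFractionRing R K]
    [IsDiscreteValuationRing (integralClosure R K)]
    [Module.Finite R (integralClosure R K)]
    (hres : ∀ y : integralClosure R K, ∃ a : R,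
      y - algebraMap R (integralClosure R K) a ∈ maximalIdeal (integralClosure R K))
    (hkinf : Infinite (ResidueField R))
    (v : K → WithTop ℤ) (hv0 : ∀ y : K, v y = ⊤ ↔ y = 0)
    (hvmul : ∀ y z : K, v (y * z) = v y + v z)
    (hvadd : ∀ y z : K, min (v y) (v z) ≤ v (y + z))
    (t : K) (ht : t ∈ integralClosure R K) (hvt : v t = 1)
    (hvRbar : ∀ y : K, y ∈ integralClosure R K ↔ 0 ≤ v y)
    (I : Ideal R) (hI0 : I ≠ ⊥) (hIrad : I.radical = maximalIdeal R)
    (hInp : ¬ I.IsPrincipal)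
    (x : R) (hxI : x ∈ I)
    (ν : ℕ) (hν : IsLeast {n : ℕ | ∀ k ≥ n, I ^ (k + 1) = Ideal.span {x} * I ^ k} ν)
    (ω : Submodule R K) (hω1 : 1 ≤ ω) (hω2 : ω < ((integralClosure R K).toSubmodule))
    (hωω : ω / ω = 1)
    (hωdual : ∀ J : Submodule R K, J ≠ ⊥ → J.FG → ω / (ω / J) = J)
    (δ : ℕ) (hδ : (δ : WithBot ℕ∞) = qlen R ((integralClosure R K).toSubmodule) 1)
    (c : ℕ) (hc : (c : WithBot ℕ∞) = qlen R ((integralClosure R K).toSubmodule) ((1 : Submodule R K) / ((integralClosure R K).toSubmodule)))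
    (n : ℕ) (hn : n + δ = c)
    (s : ℕ → ℕ) (hs0 : s 0 = 0) (hsc : s n = c) (hsmono : StrictMonoOn s (Set.Iic n))
    (hsval : ∀ i ≤ n, ((s i : ℕ) : WithTop ℤ) ∈ vvals v (1 : Submodule R K))
    (hsall : ∀ m : ℕ, (m : WithTop ℤ) ∈ vvals v (1 : Submodule R K) → m ≤ c → ∃ i ≤ n, s i = m)
    (Rmod : ℕ → Submodule R K)
    (hRmod : ∀ i, ∀ y : K, y ∈ Rmod i ↔ (y ∈ (1 : Submodule R K) ∧ (s i : WithTop ℤ) ≤ v y))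
    (r : ℕ → ℕ)
    (hr : ∀ i, 1 ≤ i → i ≤ n → (r i : WithBot ℕ∞) =
      qlen R ((1 : Submodule R K) / Rmod i) ((1 : Submodule R K) / Rmod (i - 1)))
    (Γ : Set ℕ)
    (hΓ : Γ = {i : ℕ | 1 ≤ i ∧ i ≤ n ∧ (s (i - 1) : WithTop ℤ) ∈ vvals v ((1 : Submodule R K) / (blowup R K I))})
    (b : ℕ) (hb : (b : WithBot ℕ∞) = qlen R ((integralClosure R K).toSubmodule) ((1 : Submodule R K) / ((1 : Submodule R K) / (blowup R K I))))
    (d : ℤ) (hd : d = (b : ℤ) - ∑ i ∈ Finset.Icc 1 n, Γ.indicator (fun j => (r j : ℤ)) i)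
    (hic : (1 : Submodule R K) / (blowup R K I) = (((1 : Submodule R K) / (blowup R K I)) * ((integralClosure R K).toSubmodule)) ⊓ 1) :
    d = 0 :=
  stmt_13_general R K hres v hv0 hvmul hvadd t hvt hvRbar I hI0 c hc n s hsc hsmono hsval hsall Rmod
    hRmod r hr Γ hΓ b hb d hd hic
end
end
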